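/- Let u ∈ H^1(ℝ³;ℝ³) with div u = 0, and let c ∈ H²(ℝ³) be bounded. Then ∫_{ℝ³} (u·∇c) Δc dx = Σ_{i,j} ∫_{ℝ³} ∂_{x_j} u_i · c · ∂_{x_j}∂_{x_i} c dx, and consequently |∫_{ℝ³} (u·∇c) Δc dx| ≤ ‖c‖_{L^∞} ‖∇u‖_{L²} ‖∇²c‖_{L²}. -/

import Mathlib

open MeasureTheory Real

/-- Partial derivative in direction `i` on `ℝ³`. -/
noncomputable def pd (i : Fin 3) (f : EuclideanSpace ℝ (Fin 3) → ℝ)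
    (x : EuclideanSpace ℝ (Fin 3)) : ℝ :=
  fderiv ℝ f x (EuclideanSpace.single i 1)

local notation "E3" => EuclideanSpace ℝ (Fin 3)

/-- A smooth compactly supported function. -/
def Nice (f : E3 → ℝ) : Prop := ContDiff ℝ (⊤ : ℕ∞) f ∧ HasCompactSupport f

lemma Nice.cont {f : E3 → ℝ} (h : Nice f) : Continuous f := h.1.continuous
lemma Nice.diff {f : E3 → ℝ} (h : Nice f) : Differentiable ℝ f :=
  h.1.differentiable (by simp)

lemma Nice.pd {f : E3 → ℝ} (h : Nice f) (i : Fin 3) : Nice (pd i f) := by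
  constructor
  · exact (h.1.fderiv_right (by simp)).clm_apply contDiff_const
  · exact h.2.fderiv_apply (𝕜 := ℝ) (EuclideanSpace.single i 1)

lemma Nice.mul {f g : E3 → ℝ} (hf : Nice f) (hg : Nice g) :
    Nice (fun x => f x * g x) :=
  ⟨hf.1.mul hg.1, hf.2.mul_right⟩

lemma Nice.integrable {f : E3 → ℝ} (h : Nice f) : Integrable f :=
  h.cont.integrable_of_hasCompactSupport h.2

lemma pd_mul {f g : E3 → ℝ} (hf : Differentiable ℝ f) (hg : Differentiable ℝ g)
    (i : Fin 3) (x : E3) :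
    pd i (fun y => f y * g y) x = pd i f x * g x + f x * pd i g x := by
  simp only [pd, fderiv_fun_mul (hf x) (hg x), ContinuousLinearMap.add_apply,
    ContinuousLinearMap.smul_apply, smul_eq_mul]
  ring

lemma ibp {f g : E3 → ℝ} (hf : Nice f) (hg : Nice g) (i : Fin 3) :
    ∫ x, f x * pd i g x = -∫ x, pd i f x * g x := by
  exact integral_mul_fderiv_eq_neg_fderiv_mul_of_integrable
    ((hf.pd i).mul hg).integrable (hf.mul (hg.pd i)).integrable
    (hf.mul hg).integrable (fun x _ => hf.diff x) (fun x _ => hg.diff x)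

lemma pd_sec {f : E3 → ℝ} (hf : ContDiff ℝ (⊤ : ℕ∞) f) (i j : Fin 3) (x : E3) :
    pd i (pd j f) x
      = fderiv ℝ (fderiv ℝ f) x (EuclideanSpace.single i 1)
          (EuclideanSpace.single j 1) := by
  have hd : DifferentiableAt ℝ (fderiv ℝ f) x :=
    ((hf.fderiv_right (m := 1) (by exact WithTop.coe_le_coe.mpr le_top)).differentiable (by simp)) x
  have : pd i (pd j f) x
      = fderiv ℝ (fun y => fderiv ℝ f y (EuclideanSpace.single j 1)) x
          (EuclideanSpace.single i 1) := rfl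
  rw [this, fderiv_clm_apply hd (differentiableAt_const _)]
  simp

lemma pd_comm {f : E3 → ℝ} (hf : ContDiff ℝ (⊤ : ℕ∞) f) (i j : Fin 3) (x : E3) :
    pd i (pd j f) x = pd j (pd i f) x := by
  rw [pd_sec hf, pd_sec hf]
  exact (hf.contDiffAt.isSymmSndFDerivAt (by rw [minSmoothness_of_isRCLikeNormedField]; exact WithTop.coe_le_coe.mpr le_top)) _ _

lemma pd_sum {f : Fin 3 → E3 → ℝ} (hf : ∀ i, Differentiable ℝ (f i))
    (j : Fin 3) (x : E3) :
    pd j (fun y => ∑ i, f i y) x = ∑ i, pd j (f i) x := by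
  simp only [pd]
  rw [fderiv_fun_sum (fun i _ => (hf i) x)]
  simp

lemma pd_const_zero (j : Fin 3) (x : E3) :
    pd j (fun _ => (0 : ℝ)) x = 0 := by
  simp [pd]

lemma hcs_sum {ι : Type*} (s : Finset ι) (f : ι → E3 → ℝ)
    (h : ∀ i ∈ s, HasCompactSupport (f i)) :
    HasCompactSupport (fun x => ∑ i ∈ s, f i x) := by
  classical
  induction s using Finset.induction_on with
  | empty => simp only [Finset.sum_empty]; exact HasCompactSupport.zero
  | @insert a t hne ih =>
    simp only [Finset.sum_insert hne]
    exact (h a (Finset.mem_insert_self a t)).add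
      (ih fun i hi => h i (Finset.mem_insert_of_mem hi))

/-- For divergence-free `u` and `c ∈ H² ∩ L^∞` (here smooth with
compact support, as the density argument allows),
`∫ (u·∇c) Δc = Σ_{i,j} ∫ ∂_j u_i · c · ∂_j ∂_i c`, and
`|∫ (u·∇c) Δc| ≤ ‖c‖_∞ ‖∇u‖_{L²} ‖∇²c‖_{L²}`. -/
theorem advective_term_estimate
    (u : Fin 3 → EuclideanSpace ℝ (Fin 3) → ℝ)
    (c : EuclideanSpace ℝ (Fin 3) → ℝ) (M : ℝ)
    (hu : ∀ i, ContDiff ℝ (⊤ : ℕ∞) (u i)) (hc : ContDiff ℝ (⊤ : ℕ∞) c)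
    (husupp : ∀ i, HasCompactSupport (u i)) (hcsupp : HasCompactSupport c)
    (hdiv : ∀ x, ∑ i, pd i (u i) x = 0)
    (hM : ∀ x, |c x| ≤ M) :
    (∫ x, (∑ i, u i x * pd i c x) * (∑ j, pd j (pd j c) x) =
      ∑ i, ∑ j, ∫ x, pd j (u i) x * c x * pd j (pd i c) x) ∧
    |∫ x, (∑ i, u i x * pd i c x) * (∑ j, pd j (pd j c) x)| ≤
      M * (∫ x, ∑ i, ∑ j, (pd j (u i) x) ^ 2) ^ ((1 : ℝ) / 2) *
        (∫ x, ∑ i, ∑ j, (pd j (pd i c) x) ^ 2) ^ ((1 : ℝ) / 2) := by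
  have NU : ∀ i, Nice (u i) := fun i => ⟨hu i, husupp i⟩
  have NC : Nice c := ⟨hc, hcsupp⟩
  -- Step A: expand the product of sums
  have expand : ∫ x, (∑ i, u i x * pd i c x) * (∑ j, pd j (pd j c) x)
      = ∑ j, ∑ i, ∫ x, (u i x * pd i c x) * pd j (pd j c) x := by
    have hpt : ∀ x : E3, (∑ i, u i x * pd i c x) * (∑ j, pd j (pd j c) x)
        = ∑ j, ∑ i, (u i x * pd i c x) * pd j (pd j c) x := by
      intro x
      rw [Finset.sum_mul_sum, Finset.sum_comm]
    simp only [hpt]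
    rw [integral_finset_sum _ (fun j _ => integrable_finset_sum _ (fun i _ =>
      (((NU i).mul (NC.pd i)).mul ((NC.pd j).pd j)).integrable))]
    exact Finset.sum_congr rfl fun j _ => integral_finset_sum _ (fun i _ =>
      (((NU i).mul (NC.pd i)).mul ((NC.pd j).pd j)).integrable)
  -- Step B: one integration by parts per term
  have keyA : ∀ i j, ∫ x, (u i x * pd i c x) * pd j (pd j c) x
      = (-∫ x, (pd j (u i) x * pd i c x) * pd j c x)
        - ∫ x, u i x * (pd j (pd i c) x * pd j c x) := by
    intro i j
    have h1 : ∫ x, (u i x * pd i c x) * pd j (pd j c) x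
        = -∫ x, pd j (fun y => u i y * pd i c y) x * pd j c x :=
      ibp ((NU i).mul (NC.pd i)) (NC.pd j) j
    have h2 : ∀ x : E3, pd j (fun y => u i y * pd i c y) x * pd j c x
        = (pd j (u i) x * pd i c x) * pd j c x
          + u i x * (pd j (pd i c) x * pd j c x) := by
      intro x
      rw [pd_mul (NU i).diff (NC.pd i).diff]
      ring
    rw [h1]
    simp only [h2]
    rw [integral_add ((((NU i).pd j).mul (NC.pd i)).mul (NC.pd j)).integrable
      ((NU i).mul (((NC.pd i).pd j).mul (NC.pd j))).integrable]
    ring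
  -- divergence-free consequences
  have divj : ∀ (j : Fin 3) (x : E3), ∑ i, pd i (pd j (u i)) x = 0 := by
    intro j x
    have h1 : ∀ i : Fin 3, pd i (pd j (u i)) x = pd j (pd i (u i)) x :=
      fun i => pd_comm (hu i) i j x
    simp_rw [h1]
    rw [← pd_sum (fun i => ((NU i).pd i).diff) j x]
    have h0 : (fun y : E3 => ∑ i, pd i (u i) y) = fun _ => (0 : ℝ) :=
      funext hdiv
    rw [h0, pd_const_zero]
  -- Step C: the second piece vanishes
  have keyB : ∀ j : Fin 3,
      ∑ i, ∫ x, u i x * (pd j (pd i c) x * pd j c x) = 0 := by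
    intro j
    set ψ : E3 → ℝ := fun y => pd j c y * pd j c y with hψ
    have Nψ : Nice ψ := (NC.pd j).mul (NC.pd j)
    have hpt : ∀ (i : Fin 3) (x : E3),
        u i x * (pd j (pd i c) x * pd j c x)
          = (1 / 2) * (u i x * pd i ψ x) := by
      intro i x
      have hd : pd i ψ x = pd i (pd j c) x * pd j c x
          + pd j c x * pd i (pd j c) x :=
        pd_mul (NC.pd j).diff (NC.pd j).diff i x
      rw [hd, pd_comm hc i j]
      ring
    have h1 : ∀ i : Fin 3, ∫ x, u i x * (pd j (pd i c) x * pd j c x)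
        = (1 / 2) * -∫ x, pd i (u i) x * ψ x := by
      intro i
      simp only [hpt i]
      rw [integral_const_mul, ibp (NU i) Nψ i]
    simp only [h1]
    rw [← Finset.mul_sum, Finset.sum_neg_distrib,
      ← integral_finset_sum _ (fun i _ => (((NU i).pd i).mul Nψ).integrable)]
    have hz : ∀ x : E3, ∑ i, pd i (u i) x * ψ x = 0 := by
      intro x
      rw [← Finset.sum_mul, hdiv x, zero_mul]
    simp only [hz, integral_zero, neg_zero, mul_zero]
  -- Step D: second integration by parts on the first piece
  have keyC : ∀ j : Fin 3,
      ∑ i, (-∫ x, (pd j (u i) x * pd i c x) * pd j c x)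
        = ∑ i, ∫ x, pd j (u i) x * c x * pd j (pd i c) x := by
    intro j
    have h1 : ∀ i : Fin 3, (-∫ x, (pd j (u i) x * pd i c x) * pd j c x)
        = (∫ x, pd i (pd j (u i)) x * (pd j c x * c x))
          + ∫ x, pd j (u i) x * c x * pd j (pd i c) x := by
      intro i
      have e1 : ∫ x, (pd j (u i) x * pd i c x) * pd j c x
          = ∫ x, (fun y => pd j (u i) y * pd j c y) x * pd i c x := by
        congr 1; funext x; ring
      have e2 : ∫ x, (fun y => pd j (u i) y * pd j c y) x * pd i c x
          = -∫ x, pd i (fun y => pd j (u i) y * pd j c y) x * c x :=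
        ibp (((NU i).pd j).mul (NC.pd j)) NC i
      have e3 : ∀ x : E3, pd i (fun y => pd j (u i) y * pd j c y) x * c x
          = pd i (pd j (u i)) x * (pd j c x * c x)
            + pd j (u i) x * c x * pd j (pd i c) x := by
        intro x
        rw [pd_mul ((NU i).pd j).diff (NC.pd j).diff, ← pd_comm hc i j]
        ring
      rw [e1, e2, neg_neg]
      simp only [e3]
      rw [integral_add ((((NU i).pd j).pd i).mul ((NC.pd j).mul NC)).integrable
        ((((NU i).pd j).mul NC).mul ((NC.pd i).pd j)).integrable]
    simp only [h1]
    rw [Finset.sum_add_distrib]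
    have h2 : ∑ i, ∫ x, pd i (pd j (u i)) x * (pd j c x * c x) = 0 := by
      rw [← integral_finset_sum _ (fun i _ =>
        (((NU i).pd j).pd i |>.mul ((NC.pd j).mul NC)).integrable)]
      have : ∀ x : E3, ∑ i, pd i (pd j (u i)) x * (pd j c x * c x) = 0 := by
        intro x
        rw [← Finset.sum_mul, divj j x, zero_mul]
      simp only [this, integral_zero]
    rw [h2, zero_add]
  -- the identity
  have main : ∫ x, (∑ i, u i x * pd i c x) * (∑ j, pd j (pd j c) x)
      = ∑ i, ∑ j, ∫ x, pd j (u i) x * c x * pd j (pd i c) x := by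
    rw [expand]
    have : ∀ j : Fin 3, ∑ i, ∫ x, (u i x * pd i c x) * pd j (pd j c) x
        = ∑ i, ∫ x, pd j (u i) x * c x * pd j (pd i c) x := by
      intro j
      simp only [keyA]
      rw [Finset.sum_sub_distrib, keyB j, sub_zero, keyC j]
    simp only [this]
    rw [Finset.sum_comm]
  refine ⟨main, ?_⟩
  -- the estimate
  have M0 : 0 ≤ M := le_trans (abs_nonneg _) (hM 0)
  set a : E3 → ℝ := fun x => Real.sqrt (∑ i, ∑ j, (pd j (u i) x) ^ 2) with ha
  set b : E3 → ℝ := fun x => Real.sqrt (∑ i, ∑ j, (pd j (pd i c) x) ^ 2) with hb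
  have hSa : ∀ x : E3, 0 ≤ ∑ i, ∑ j, (pd j (u i) x) ^ 2 :=
    fun x => Finset.sum_nonneg fun i _ => Finset.sum_nonneg fun j _ => sq_nonneg _
  have hSb : ∀ x : E3, 0 ≤ ∑ i, ∑ j, (pd j (pd i c) x) ^ 2 :=
    fun x => Finset.sum_nonneg fun i _ => Finset.sum_nonneg fun j _ => sq_nonneg _
  -- pointwise Cauchy-Schwarz bound
  have hpt : ∀ x : E3,
      |∑ p : Fin 3 × Fin 3, pd p.2 (u p.1) x * c x * pd p.2 (pd p.1 c) x|
        ≤ M * (a x * b x) := by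
    intro x
    have e1 : ∑ p : Fin 3 × Fin 3, pd p.2 (u p.1) x * c x * pd p.2 (pd p.1 c) x
        = c x * ∑ p : Fin 3 × Fin 3, pd p.2 (u p.1) x * pd p.2 (pd p.1 c) x := by
      rw [Finset.mul_sum]; exact Finset.sum_congr rfl fun p _ => by ring
    rw [e1, abs_mul]
    have cs : |∑ p : Fin 3 × Fin 3, pd p.2 (u p.1) x * pd p.2 (pd p.1 c) x|
        ≤ a x * b x := by
      have h2 := Finset.sum_mul_sq_le_sq_mul_sq Finset.univ
        (fun p : Fin 3 × Fin 3 => pd p.2 (u p.1) x)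
        (fun p : Fin 3 × Fin 3 => pd p.2 (pd p.1 c) x)
      have := Real.sqrt_le_sqrt h2
      rw [Real.sqrt_sq_eq_abs] at this
      refine this.trans_eq ?_
      rw [Real.sqrt_mul (Finset.sum_nonneg fun p _ => sq_nonneg _)]
      congr 1
      · rw [ha]; congr 1; rw [← Finset.sum_product']; rfl
      · rw [hb]; congr 1; rw [← Finset.sum_product']; rfl
    exact mul_le_mul (hM x) cs (abs_nonneg _) M0
  have hsq : ∀ {f : E3 → ℝ}, Nice f → HasCompactSupport (fun x => f x ^ 2) :=
    fun h => by simpa [sq] using (h.mul h).2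
  -- compact supports and Memℒp
  have hacs : HasCompactSupport a := by
    have h1 : HasCompactSupport (fun x : E3 => ∑ i, ∑ j, (pd j (u i) x) ^ 2) :=
      hcs_sum _ _ fun i _ => hcs_sum _ _ fun j _ => hsq ((NU i).pd j)
    exact h1.comp_left (g := Real.sqrt) Real.sqrt_zero
  have hbcs : HasCompactSupport b := by
    have h1 : HasCompactSupport (fun x : E3 => ∑ i, ∑ j, (pd j (pd i c) x) ^ 2) :=
      hcs_sum _ _ fun i _ => hcs_sum _ _ fun j _ => hsq ((NC.pd i).pd j)
    exact h1.comp_left (g := Real.sqrt) Real.sqrt_zero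
  have hacont : Continuous a := by
    apply Real.continuous_sqrt.comp
    exact continuous_finset_sum _ fun i _ => continuous_finset_sum _ fun j _ =>
      (((NU i).pd j).cont).pow 2
  have hbcont : Continuous b := by
    apply Real.continuous_sqrt.comp
    exact continuous_finset_sum _ fun i _ => continuous_finset_sum _ fun j _ =>
      (((NC.pd i).pd j).cont).pow 2
  -- Hölder
  have holder : ∫ x, a x * b x
      ≤ (∫ x, a x ^ (2 : ℝ)) ^ ((1 : ℝ) / 2) * (∫ x, b x ^ (2 : ℝ)) ^ ((1 : ℝ) / 2) := by
    refine integral_mul_le_Lp_mul_Lq_of_nonneg ⟨by norm_num, by norm_num, by norm_num⟩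
      (ae_of_all _ fun x => Real.sqrt_nonneg _)
      (ae_of_all _ fun x => Real.sqrt_nonneg _)
      (hacont.memLp_of_hasCompactSupport hacs)
      (hbcont.memLp_of_hasCompactSupport hbcs)
  have ea : ∫ x, a x ^ (2 : ℝ) = ∫ x, ∑ i, ∑ j, (pd j (u i) x) ^ 2 := by
    congr 1; funext x
    rw [show (2 : ℝ) = ((2 : ℕ) : ℝ) by norm_num, Real.rpow_natCast, ha]
    exact Real.sq_sqrt (hSa x)
  have eb : ∫ x, b x ^ (2 : ℝ) = ∫ x, ∑ i, ∑ j, (pd j (pd i c) x) ^ 2 := by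
    congr 1; funext x
    rw [show (2 : ℝ) = ((2 : ℕ) : ℝ) by norm_num, Real.rpow_natCast, hb]
    exact Real.sq_sqrt (hSb x)
  -- assemble
  rw [main]
  have sum_prod : ∑ i, ∑ j, ∫ x, pd j (u i) x * c x * pd j (pd i c) x
      = ∫ x, ∑ p : Fin 3 × Fin 3, pd p.2 (u p.1) x * c x * pd p.2 (pd p.1 c) x := by
    rw [integral_finset_sum _ (fun p _ =>
      ((((NU p.1).pd p.2).mul NC).mul ((NC.pd p.1).pd p.2)).integrable)]
    rw [← Finset.sum_product']
    rfl
  rw [sum_prod]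
  have hInt : Integrable (fun x => M * (a x * b x)) :=
    (continuous_const.mul (hacont.mul hbcont)).integrable_of_hasCompactSupport
      (hacs.mul_right.mul_left)
  calc |∫ x, ∑ p : Fin 3 × Fin 3, pd p.2 (u p.1) x * c x * pd p.2 (pd p.1 c) x|
      ≤ ∫ x, M * (a x * b x) := by
        rw [← Real.norm_eq_abs]
        refine norm_integral_le_of_norm_le hInt (ae_of_all _ fun x => ?_)
        rw [Real.norm_eq_abs]
        exact hpt x
    _ = M * ∫ x, a x * b x := integral_const_mul _ _
    _ ≤ M * ((∫ x, a x ^ (2 : ℝ)) ^ ((1 : ℝ) / 2) * (∫ x, b x ^ (2 : ℝ)) ^ ((1 : ℝ) / 2)) :=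
        mul_le_mul_of_nonneg_left holder M0
    _ = M * (∫ x, ∑ i, ∑ j, (pd j (u i) x) ^ 2) ^ ((1 : ℝ) / 2) *
          (∫ x, ∑ i, ∑ j, (pd j (pd i c) x) ^ 2) ^ ((1 : ℝ) / 2) := by
        rw [ea, eb, mul_assoc]
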